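/- Let A, B, X, Y be jointly distributed random variables with finite ranges such that the triple (A,X,Y) satisfies condition (B): for all a, x, y, if p(a,x) > 0 and p(a,y) > 0 then p(a,x,y) > 0. If moreover p(a,x)·p(a,y)·p(x,y) ≤ p(a)·p(x)·p(y)·p(a,x,y) for all a, x, y, then I(A:B) ≤ I(A:B | X) + I(A:B | Y). -/

import Mathlib

open Finset

noncomputable section

/-- Probability of an event under a distribution on a finite sample space. -/
def pr {Ω : Type*} [Fintype Ω] (p : Ω → ℝ) (E : Set Ω) : ℝ :=
  ∑ ω, E.indicator p ω

/-- `p` is a probability mass function on the finite sample space `Ω`. -/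
def IsPMF {Ω : Type*} [Fintype Ω] (p : Ω → ℝ) : Prop :=
  (∀ ω, 0 ≤ p ω) ∧ ∑ ω, p ω = 1

/-- Shannon entropy (base 2) of a random variable `V` on a finite sample space. -/
def ent {Ω β : Type*} [Fintype Ω] [Fintype β] (p : Ω → ℝ) (V : Ω → β) : ℝ :=
  -∑ v, pr p {ω | V ω = v} * Real.logb 2 (pr p {ω | V ω = v})

/-- Conditional Shannon entropy (base 2): `H(V | W)`. -/
def condEnt {Ω β γ : Type*} [Fintype Ω] [Fintype β] [Fintype γ]
    (p : Ω → ℝ) (V : Ω → β) (W : Ω → γ) : ℝ :=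
  ent p (fun ω => (V ω, W ω)) - ent p W

/-- Mutual information (base 2): `I(V : W)`. -/
def mi {Ω β γ : Type*} [Fintype Ω] [Fintype β] [Fintype γ]
    (p : Ω → ℝ) (V : Ω → β) (W : Ω → γ) : ℝ :=
  ent p V + ent p W - ent p (fun ω => (V ω, W ω))

/-- Conditional mutual information (base 2): `I(V : W | U)`. -/
def cmi {Ω β γ δ : Type*} [Fintype Ω] [Fintype β] [Fintype γ] [Fintype δ]
    (p : Ω → ℝ) (V : Ω → β) (W : Ω → γ) (U : Ω → δ) : ℝ :=
  ent p (fun ω => (V ω, U ω)) + ent p (fun ω => (W ω, U ω))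
    - ent p (fun ω => (V ω, W ω, U ω)) - ent p U

end

/-!
Let `q(a,b,x,y) = p(a,b,x) p(a,b,y) / p(a,b)` be the coupling in which `X` and `Y` are
conditionally independent given `(A,B)`. It has the same `(A,B,X)`- and `(A,B,Y)`-marginals as
`p`, so `I(A:B|X) + I(A:B|Y) - I(A:B)` is the `q`-expectation of `log (q / u)` with
`u = p(a,x) p(a,y) p(b,x) p(b,y) / (p(a) p(b) p(x) p(y))`. Where `q > 0`, condition (B) gives
`p(x,y) > 0`, and the hypothesis then says `u ≤ w := p(b,x) p(b,y) / p(b) · p(a,x,y) / p(x,y)`.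
Since `w` has total mass at most `1`, Gibbs' inequality `∑ q log (q / w) ≥ ∑ (q - w) ≥ 0` closes
the argument.
-/

lemma sub_le_mul_log_div {q w : ℝ} (hq : 0 ≤ q) (hw : 0 < w) : q - w ≤ q * Real.log (q / w) := by
  rcases hq.eq_or_lt with rfl | hq
  · simpa using hw.le
  have h := Real.one_sub_inv_le_log_of_pos (div_pos hq hw)
  rw [inv_div] at h
  calc q - w = q * (1 - w / q) := by field_simp
    _ ≤ q * Real.log (q / w) := mul_le_mul_of_nonneg_left h hq.le

section

variable {Ω : Type*} [Fintype Ω]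

section Probability

variable {p : Ω → ℝ}

lemma pr_nonneg (hp : ∀ ω, 0 ≤ p ω) (E : Set Ω) : 0 ≤ pr p E :=
  Finset.sum_nonneg fun ω _ => Set.indicator_nonneg (fun ω _ => hp ω) ω

lemma pr_mono (hp : ∀ ω, 0 ≤ p ω) {E F : Set Ω} (hEF : E ⊆ F) : pr p E ≤ pr p F :=
  Finset.sum_le_sum fun ω _ => Set.indicator_le_indicator_of_subset hEF hp ω

lemma pr_pos_of_subset (hp : ∀ ω, 0 ≤ p ω) {E F : Set Ω} (hEF : E ⊆ F) (hE : 0 < pr p E) :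
    0 < pr p F :=
  hE.trans_le (pr_mono hp hEF)

lemma mul_div_pr_of_subset (hp : ∀ ω, 0 ≤ p ω) {E F : Set Ω} (hEF : E ⊆ F) :
    pr p E * pr p F / pr p F = pr p E := by
  rcases (pr_nonneg hp F).eq_or_lt with hF | hF
  · rw [← hF, div_zero]
    exact (le_antisymm (hF ▸ pr_mono hp hEF) (pr_nonneg hp E)).symm
  · field_simp

variable (p)

lemma sum_pr_and_eq {γ : Type*} [Fintype γ] (P : Ω → Prop) (W : Ω → γ) :
    ∑ t, pr p {ω | P ω ∧ W ω = t} = pr p {ω | P ω} := by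
  classical
  unfold pr
  rw [Finset.sum_comm]
  refine Finset.sum_congr rfl fun ω _ => ?_
  simp [Set.indicator_apply, ite_and]

lemma sum_pr_eq_and {γ : Type*} [Fintype γ] (W : Ω → γ) (P : Ω → Prop) :
    ∑ t, pr p {ω | W ω = t ∧ P ω} = pr p {ω | P ω} := by
  simpa only [and_comm] using sum_pr_and_eq p P W

lemma sum_pr_and_div_le_one {α : Type*} [Fintype α] (A : Ω → α) (P : Ω → Prop) :
    ∑ a, pr p {ω | A ω = a ∧ P ω} / pr p {ω | P ω} ≤ 1 := by
  rw [← Finset.sum_div, sum_pr_eq_and]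
  exact div_self_le_one _

lemma sum_pr_mul {β : Type*} [Fintype β] (V : Ω → β) (g : β → ℝ) :
    ∑ v, pr p {ω | V ω = v} * g v = ∑ ω, p ω * g (V ω) := by
  classical
  unfold pr
  simp only [Finset.sum_mul]
  rw [Finset.sum_comm]
  refine Finset.sum_congr rfl fun ω _ => ?_
  simp [Set.indicator_apply]

lemma sum_sum_pr_mul {β γ : Type*} [Fintype β] [Fintype γ] (V : Ω → β) (W : Ω → γ)
    (g : β → γ → ℝ) :
    ∑ v, ∑ w, pr p {ω | V ω = v ∧ W ω = w} * g v w = ∑ ω, p ω * g (V ω) (W ω) := by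
  simpa only [Prod.mk.injEq, Fintype.sum_prod_type] using
    sum_pr_mul p (fun ω => (V ω, W ω)) fun vw => g vw.1 vw.2

end Probability

section Information

variable (p : Ω → ℝ) {β γ δ : Type*} [Fintype β] [Fintype γ] [Fintype δ]

noncomputable def pmi (V : Ω → β) (W : Ω → γ) (v : β) (w : γ) : ℝ :=
  Real.logb 2 (pr p {ω | V ω = v ∧ W ω = w})
    - Real.logb 2 (pr p {ω | V ω = v}) - Real.logb 2 (pr p {ω | W ω = w})

noncomputable def condPmi (V : Ω → β) (W : Ω → γ) (U : Ω → δ) (v : β) (w : γ) (u : δ) : ℝ :=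
  Real.logb 2 (pr p {ω | V ω = v ∧ W ω = w ∧ U ω = u}) + Real.logb 2 (pr p {ω | U ω = u})
    - Real.logb 2 (pr p {ω | V ω = v ∧ U ω = u}) - Real.logb 2 (pr p {ω | W ω = w ∧ U ω = u})

lemma ent_eq_sum (V : Ω → β) :
    ent p V = -∑ ω, p ω * Real.logb 2 (pr p {ω' | V ω' = V ω}) :=
  congrArg Neg.neg (sum_pr_mul p V fun v => Real.logb 2 (pr p {ω | V ω = v}))

lemma mi_eq_sum (V : Ω → β) (W : Ω → γ) :
    mi p V W = ∑ ω, p ω * pmi p V W (V ω) (W ω) := by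
  simp only [mi, pmi, ent_eq_sum, Prod.mk.injEq, mul_sub, Finset.sum_sub_distrib]
  ring

lemma cmi_eq_sum (V : Ω → β) (W : Ω → γ) (U : Ω → δ) :
    cmi p V W U = ∑ ω, p ω * condPmi p V W U (V ω) (W ω) (U ω) := by
  simp only [cmi, condPmi, ent_eq_sum, Prod.mk.injEq, mul_add, mul_sub, Finset.sum_add_distrib,
    Finset.sum_sub_distrib]
  ring

end Information

section Coupling

variable {p : Ω → ℝ} {ζ χ υ : Type*}

variable (p) in
noncomputable def condIndepCoupling (Z : Ω → ζ) (X : Ω → χ) (Y : Ω → υ) (z : ζ) (x : χ)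
    (y : υ) : ℝ :=
  pr p {ω | Z ω = z ∧ X ω = x} * pr p {ω | Z ω = z ∧ Y ω = y} / pr p {ω | Z ω = z}

variable (Z : Ω → ζ) (X : Ω → χ) (Y : Ω → υ)

lemma condIndepCoupling_nonneg (hp : ∀ ω, 0 ≤ p ω) (z : ζ) (x : χ) (y : υ) :
    0 ≤ condIndepCoupling p Z X Y z x y :=
  div_nonneg (mul_nonneg (pr_nonneg hp _) (pr_nonneg hp _)) (pr_nonneg hp _)

lemma pos_of_condIndepCoupling_pos (hp : ∀ ω, 0 ≤ p ω) {z : ζ} {x : χ} {y : υ}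
    (h : 0 < condIndepCoupling p Z X Y z x y) :
    0 < pr p {ω | Z ω = z ∧ X ω = x} ∧ 0 < pr p {ω | Z ω = z ∧ Y ω = y} := by
  refine ⟨(pr_nonneg hp _).lt_of_ne' fun h0 => ?_, (pr_nonneg hp _).lt_of_ne' fun h0 => ?_⟩ <;>
    simp [condIndepCoupling, h0] at h

lemma sum_condIndepCoupling_right [Fintype υ] (hp : ∀ ω, 0 ≤ p ω) (z : ζ) (x : χ) :
    ∑ y, condIndepCoupling p Z X Y z x y = pr p {ω | Z ω = z ∧ X ω = x} := by
  simp only [condIndepCoupling, ← Finset.sum_div, ← Finset.mul_sum,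
    sum_pr_and_eq p (fun ω => Z ω = z) Y]
  exact mul_div_pr_of_subset hp fun ω h => h.1

lemma sum_condIndepCoupling_left [Fintype χ] (hp : ∀ ω, 0 ≤ p ω) (z : ζ) (y : υ) :
    ∑ x, condIndepCoupling p Z X Y z x y = pr p {ω | Z ω = z ∧ Y ω = y} := by
  simp only [condIndepCoupling, ← Finset.sum_div, ← Finset.sum_mul,
    sum_pr_and_eq p (fun ω => Z ω = z) X, mul_comm (pr p {ω | Z ω = z})]
  exact mul_div_pr_of_subset hp fun ω h => h.1

variable [Fintype ζ] [Fintype χ] [Fintype υ]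

lemma sum_condIndepCoupling_mul_left (hp : ∀ ω, 0 ≤ p ω) (f : ζ → χ → ℝ) :
    ∑ z, ∑ x, ∑ y, condIndepCoupling p Z X Y z x y * f z x = ∑ ω, p ω * f (Z ω) (X ω) := by
  simp only [← Finset.sum_mul, sum_condIndepCoupling_right Z X Y hp]
  exact sum_sum_pr_mul p Z X f

lemma sum_condIndepCoupling_mul_right (hp : ∀ ω, 0 ≤ p ω) (f : ζ → υ → ℝ) :
    ∑ z, ∑ x, ∑ y, condIndepCoupling p Z X Y z x y * f z y = ∑ ω, p ω * f (Z ω) (Y ω) := by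
  simp only [Finset.sum_comm (γ := χ), ← Finset.sum_mul, sum_condIndepCoupling_left Z X Y hp]
  exact sum_sum_pr_mul p Z Y f

lemma sum_condIndepCoupling (hp : IsPMF p) :
    ∑ z, ∑ x, ∑ y, condIndepCoupling p Z X Y z x y = 1 := by
  simpa [hp.2] using sum_condIndepCoupling_mul_left Z X Y hp.1 fun _ _ => 1

end Coupling

section Ingleton

variable {p : Ω → ℝ} {α β χ υ : Type*} {A : Ω → α} {B : Ω → β} {X : Ω → χ} {Y : Ω → υ}

lemma condIndepCoupling_sub_le (hp : ∀ ω, 0 ≤ p ω)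
    (hB : ∀ (a : α) (x : χ) (y : υ),
      0 < pr p {ω | A ω = a ∧ X ω = x} →
      0 < pr p {ω | A ω = a ∧ Y ω = y} →
      0 < pr p {ω | A ω = a ∧ X ω = x ∧ Y ω = y})
    (hineq : ∀ (a : α) (x : χ) (y : υ),
      pr p {ω | A ω = a ∧ X ω = x} * pr p {ω | A ω = a ∧ Y ω = y}
          * pr p {ω | X ω = x ∧ Y ω = y} ≤
        pr p {ω | A ω = a} * pr p {ω | X ω = x} * pr p {ω | Y ω = y}
          * pr p {ω | A ω = a ∧ X ω = x ∧ Y ω = y})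
    (a : α) (b : β) (x : χ) (y : υ) :
    condIndepCoupling p (fun ω => (A ω, B ω)) X Y (a, b) x y
        - condIndepCoupling p B X Y b x y
          * (pr p {ω | A ω = a ∧ X ω = x ∧ Y ω = y} / pr p {ω | X ω = x ∧ Y ω = y})
      ≤ Real.log 2 * (condIndepCoupling p (fun ω => (A ω, B ω)) X Y (a, b) x y
          * (condPmi p A B X a b x + condPmi p A B Y a b y - pmi p A B a b)) := by
  set q := condIndepCoupling p (fun ω => (A ω, B ω)) X Y (a, b) x y with hq_def
  set w := condIndepCoupling p B X Y b x y
    * (pr p {ω | A ω = a ∧ X ω = x ∧ Y ω = y} / pr p {ω | X ω = x ∧ Y ω = y}) with hw_def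
  have hq0 : 0 ≤ q := condIndepCoupling_nonneg _ _ _ hp _ _ _
  rcases hq0.eq_or_lt with hq | hq
  · rw [← hq]
    simpa using mul_nonneg (condIndepCoupling_nonneg _ _ _ hp _ _ _)
      (div_nonneg (pr_nonneg hp _) (pr_nonneg hp _))
  obtain ⟨habx, haby⟩ := pos_of_condIndepCoupling_pos _ _ _ hp hq
  simp only [Prod.mk.injEq, and_assoc] at habx haby
  have hab : 0 < pr p {ω | A ω = a ∧ B ω = b} := pr_pos_of_subset hp (fun ω h => ⟨h.1, h.2.1⟩) habx
  have hax : 0 < pr p {ω | A ω = a ∧ X ω = x} := pr_pos_of_subset hp (fun ω h => ⟨h.1, h.2.2⟩) habx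
  have hay : 0 < pr p {ω | A ω = a ∧ Y ω = y} := pr_pos_of_subset hp (fun ω h => ⟨h.1, h.2.2⟩) haby
  have hbx : 0 < pr p {ω | B ω = b ∧ X ω = x} := pr_pos_of_subset hp (fun ω h => h.2) habx
  have hby : 0 < pr p {ω | B ω = b ∧ Y ω = y} := pr_pos_of_subset hp (fun ω h => h.2) haby
  have ha : 0 < pr p {ω | A ω = a} := pr_pos_of_subset hp (fun ω h => h.1) hab
  have hb : 0 < pr p {ω | B ω = b} := pr_pos_of_subset hp (fun ω h => h.1) hbx
  have hx : 0 < pr p {ω | X ω = x} := pr_pos_of_subset hp (fun ω h => h.2) hbx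
  have hy : 0 < pr p {ω | Y ω = y} := pr_pos_of_subset hp (fun ω h => h.2) hby
  have haxy := hB a x y hax hay
  have hxy : 0 < pr p {ω | X ω = x ∧ Y ω = y} := pr_pos_of_subset hp (fun ω h => h.2) haxy
  have hw : 0 < w := by
    simp only [hw_def, condIndepCoupling]
    positivity
  have hlog := Real.log_le_log (by positivity) (hineq a x y)
  calc q - w ≤ q * Real.log (q / w) := sub_le_mul_log_div hq.le hw
    _ ≤ q * (Real.log 2 * (condPmi p A B X a b x + condPmi p A B Y a b y - pmi p A B a b)) := by
      refine mul_le_mul_of_nonneg_left ?_ hq.le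
      have hlog2 : Real.log 2 ≠ 0 := by positivity
      simp only [hq_def, hw_def, condIndepCoupling, condPmi, pmi, Real.logb, Prod.mk.injEq,
        and_assoc, mul_add, mul_sub, mul_div_cancel₀ _ hlog2]
      simp (disch := positivity) only [Real.log_div, Real.log_mul] at hlog ⊢
      linarith
    _ = _ := by ring

variable (p A B X Y) [Fintype α] [Fintype β] [Fintype χ] [Fintype υ]

lemma cmi_add_cmi_sub_mi_eq (hp : ∀ ω, 0 ≤ p ω) :
    cmi p A B X + cmi p A B Y - mi p A B
      = ∑ z, ∑ x, ∑ y, condIndepCoupling p (fun ω => (A ω, B ω)) X Y z x y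
          * (condPmi p A B X z.1 z.2 x + condPmi p A B Y z.1 z.2 y - pmi p A B z.1 z.2) := by
  have hX := sum_condIndepCoupling_mul_left (fun ω => (A ω, B ω)) X Y hp
    fun z x => condPmi p A B X z.1 z.2 x - pmi p A B z.1 z.2
  have hY := sum_condIndepCoupling_mul_right (fun ω => (A ω, B ω)) X Y hp
    fun z y => condPmi p A B Y z.1 z.2 y
  calc _ = ∑ ω, p ω * (condPmi p A B X (A ω) (B ω) (X ω) - pmi p A B (A ω) (B ω))
        + ∑ ω, p ω * condPmi p A B Y (A ω) (B ω) (Y ω) := by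
        simp only [cmi_eq_sum, mi_eq_sum, mul_sub, Finset.sum_sub_distrib]
        ring
    _ = _ := by
        rw [← hX, ← hY]
        simp only [← Finset.sum_add_distrib, ← mul_add, add_sub_right_comm]

lemma sum_condIndepCoupling_mul_condProb_le_one (hp : IsPMF p) :
    ∑ z : α × β, ∑ x, ∑ y, condIndepCoupling p B X Y z.2 x y
      * (pr p {ω | A ω = z.1 ∧ X ω = x ∧ Y ω = y} / pr p {ω | X ω = x ∧ Y ω = y}) ≤ 1 := by
  rw [Fintype.sum_prod_type, Finset.sum_comm]
  calc _ = ∑ b, ∑ x, ∑ y, condIndepCoupling p B X Y b x y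
        * ∑ a, pr p {ω | A ω = a ∧ X ω = x ∧ Y ω = y} / pr p {ω | X ω = x ∧ Y ω = y} := by
        simp only [Finset.mul_sum]
        refine Finset.sum_congr rfl fun b _ => ?_
        rw [Finset.sum_comm]
        exact Finset.sum_congr rfl fun x _ => Finset.sum_comm
    _ ≤ ∑ b, ∑ x, ∑ y, condIndepCoupling p B X Y b x y * 1 := by
        gcongr with b _ x _ y _
        · exact condIndepCoupling_nonneg _ _ _ hp.1 _ _ _
        · exact sum_pr_and_div_le_one p A fun ω => X ω = x ∧ Y ω = y
    _ = 1 := by simpa using sum_condIndepCoupling B X Y hp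

end Ingleton

end

/-- Under condition (B) and the pointwise inequality
`p(a,x)p(a,y)p(x,y) ≤ p(a)p(x)p(y)p(a,x,y)`, Ingleton-type inequality
`I(A:B) ≤ I(A:B|X) + I(A:B|Y)` holds. -/
theorem stmt_9 {Ω α β χ υ : Type*}
    [Fintype Ω] [Fintype α] [Fintype β] [Fintype χ] [Fintype υ]
    (p : Ω → ℝ) (hp : IsPMF p)
    (A : Ω → α) (B : Ω → β) (X : Ω → χ) (Y : Ω → υ)
    (hB : ∀ (a : α) (x : χ) (y : υ),
      0 < pr p {ω | A ω = a ∧ X ω = x} →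
      0 < pr p {ω | A ω = a ∧ Y ω = y} →
      0 < pr p {ω | A ω = a ∧ X ω = x ∧ Y ω = y})
    (hineq : ∀ (a : α) (x : χ) (y : υ),
      pr p {ω | A ω = a ∧ X ω = x} * pr p {ω | A ω = a ∧ Y ω = y}
          * pr p {ω | X ω = x ∧ Y ω = y} ≤
        pr p {ω | A ω = a} * pr p {ω | X ω = x} * pr p {ω | Y ω = y}
          * pr p {ω | A ω = a ∧ X ω = x ∧ Y ω = y}) :
    mi p A B ≤ cmi p A B X + cmi p A B Y := by
  have hsum := Finset.sum_le_sum (s := Finset.univ) fun (z : α × β) _ =>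
    Finset.sum_le_sum (s := Finset.univ) fun x _ => Finset.sum_le_sum (s := Finset.univ) fun y _ =>
      condIndepCoupling_sub_le (B := B) hp.1 hB hineq z.1 z.2 x y
  simp only [Finset.sum_sub_distrib, ← Finset.mul_sum, Prod.mk.eta,
    sum_condIndepCoupling _ X Y hp, ← cmi_add_cmi_sub_mi_eq p A B X Y hp.1] at hsum
  have hmass := sum_condIndepCoupling_mul_condProb_le_one p A B X Y hp
  have hgap : 0 ≤ Real.log 2 * (cmi p A B X + cmi p A B Y - mi p A B) := by linarith
  linarith [(mul_nonneg_iff_of_pos_left (Real.log_pos one_lt_two)).1 hgap]
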